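/- arXiv:2003.03950 — 2 statements merged into one kernel-verified Lean document; each statement's English description precedes it below -/
import Mathlib

section
/- Let d_Θ, d_Y be positive integers, F a real d_Y × d_Θ matrix, f, y ∈ ℝ^{d_Y} and σ > 0. Define Σ = (I + σ⁻² FᵀF)⁻¹ (the matrix I + σ⁻²FᵀF is positive definite, hence invertible) and μ = σ⁻² Σ Fᵀ (y − f). Suppose θ : ℝ → ℝ^{d_Θ}, η : ℝ → ℝ^{d_Y}, v_θ : ℝ → ℝ^{d_Θ}, v_η : ℝ → ℝ^{d_Y} and λ : ℝ → ℝ^{d_Y} are differentiable curves satisfying, for all t ∈ ℝ: θ'(t) = v_θ(t), η'(t) = v_η(t), v_θ'(t) = −θ(t) − Fᵀ λ(t), v_η'(t) = −η(t) − σ λ(t), together with the constraints F θ(t) + f + σ η(t) − y = 0 and F v_θ(t) + σ v_η(t) = 0. Then θ is twice differentiable and satisfies θ''(t) = −(θ(t) − μ) for all t; that is, the θ-component of the constrained Hamiltonian dynamics coincides with the Hamiltonian dynamics θ'' = −Σ·Σ⁻¹(θ − μ) obtained from the Hamiltonian H(θ,p) = ½(θ−μ)ᵀΣ⁻¹(θ−μ)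 + ½ pᵀΣp, i.e. with the metric (mass matrix) set to the posterior precision matrix M = Σ⁻¹. -/
/-!
Differentiating the velocity constraint `F v_θ + σ v_η = 0` along the flow and substituting the
equations of motion and the position constraint eliminates `θ` and `η`: the multiplier solves
`(F Fᵀ + σ²) λ = f − y`. Applying `Fᵀ` and the push-through identity
`Fᵀ (F Fᵀ + σ²) = (Fᵀ F + σ²) Fᵀ` gives `Fᵀ λ = −μ`, so `v_θ' = −θ − Fᵀ λ = −(θ − μ)`.
-/

open Matrix

lemma Matrix.PosDef.one_add_smul_transpose_mul_self {m n : Type*} [Fintype m] [Fintype n]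
    [DecidableEq n] (F : Matrix m n ℝ) {c : ℝ} (hc : 0 ≤ c) : (1 + c • (Fᵀ * F)).PosDef :=
  PosDef.one.add_posSemidef <| by
    simpa using (posSemidef_conjTranspose_mul_self F).smul hc

lemma HasDerivAt.mulVec {m n : Type*} [Fintype m] [Fintype n] (F : Matrix m n ℝ)
    {v : ℝ → n → ℝ} {v' : n → ℝ} {t : ℝ} (hv : HasDerivAt v v' t) :
    HasDerivAt (fun s => F *ᵥ v s) (F *ᵥ v') t := by
  simpa [Function.comp_def] using
    F.mulVecLin.toContinuousLinearMap.hasFDerivAt.comp_hasDerivAt t hv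

lemma lagrange_multiplier_eq {R m n : Type*} [CommRing R] [Fintype m] [Fintype n]
    {F : Matrix m n R} {f y η lam : m → R} {θ : n → R} {σ : R}
    (hpos : F *ᵥ θ + f + σ • η - y = 0)
    (hacc : F *ᵥ (-θ - Fᵀ *ᵥ lam) + σ • (-η - σ • lam) = 0) :
    (F * Fᵀ) *ᵥ lam + σ ^ 2 • lam = f - y := by
  have hsum : (F * Fᵀ) *ᵥ lam + σ ^ 2 • lam - (f - y) =
      -(F *ᵥ (-θ - Fᵀ *ᵥ lam) + σ • (-η - σ • lam)) - (F *ᵥ θ + f + σ • η - y) := by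
    simp only [mulVec_sub, mulVec_neg, mulVec_mulVec, smul_sub, smul_neg, smul_smul, ← sq]
    abel
  rw [← sub_eq_zero, hsum, hpos, hacc, neg_zero, sub_zero]

lemma transpose_mulVec_eq_of_mul_transpose_mulVec_add {m n : Type*} [Fintype m] [Fintype n]
    [DecidableEq n] {F : Matrix m n ℝ} {lam r : m → ℝ} {σ : ℝ} (hσ : σ ≠ 0)
    (h : (F * Fᵀ) *ᵥ lam + σ ^ 2 • lam = r) :
    Fᵀ *ᵥ lam = (σ ^ 2)⁻¹ • ((1 + (σ ^ 2)⁻¹ • (Fᵀ * F))⁻¹ *ᵥ (Fᵀ *ᵥ r)) := by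
  set A := 1 + (σ ^ 2)⁻¹ • (Fᵀ * F)
  have hσ2 : σ ^ 2 ≠ 0 := pow_ne_zero 2 hσ
  have hA : IsUnit A.det :=
    (isUnit_iff_isUnit_det A).mp (PosDef.one_add_smul_transpose_mul_self F (by positivity)).isUnit
  have hpush : A * Fᵀ = (σ ^ 2)⁻¹ • (Fᵀ * (F * Fᵀ) + σ ^ 2 • Fᵀ) := by
    rw [Matrix.add_mul, Matrix.one_mul, Matrix.smul_mul, smul_add, smul_smul,
      inv_mul_cancel₀ hσ2, one_smul, Matrix.mul_assoc, add_comm]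
  have hAw : A *ᵥ (Fᵀ *ᵥ lam) = (σ ^ 2)⁻¹ • (Fᵀ *ᵥ r) := by
    rw [mulVec_mulVec, hpush, smul_mulVec, add_mulVec, smul_mulVec, ← mulVec_mulVec, ← h,
      mulVec_add, mulVec_smul]
  rw [← mulVec_smul, ← hAw, mulVec_mulVec, nonsing_inv_mul A hA, one_mulVec]

theorem stmt0_general (dΘ dY : ℕ)
    (F : Matrix (Fin dY) (Fin dΘ) ℝ) (f y : Fin dY → ℝ) (σ : ℝ) (hσ : 0 < σ)
    (S : Matrix (Fin dΘ) (Fin dΘ) ℝ)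
    (hS : S = (1 + (σ ^ 2)⁻¹ • (Fᵀ * F))⁻¹)
    (μ : Fin dΘ → ℝ)
    (hμ : μ = (σ ^ 2)⁻¹ • (S *ᵥ (Fᵀ *ᵥ (y - f))))
    (θ : ℝ → Fin dΘ → ℝ) (η : ℝ → Fin dY → ℝ)
    (vθ : ℝ → Fin dΘ → ℝ) (vη : ℝ → Fin dY → ℝ) (lam : ℝ → Fin dY → ℝ)
    (hvθ : ∀ t : ℝ, HasDerivAt vθ (-(θ t) - Fᵀ *ᵥ lam t) t)
    (hvη : ∀ t : ℝ, HasDerivAt vη (-(η t) - σ • lam t) t)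
    (hpos : ∀ t : ℝ, F *ᵥ θ t + f + σ • η t - y = 0)
    (hmom : ∀ t : ℝ, F *ᵥ vθ t + σ • vη t = 0) :
    ∀ t : ℝ, HasDerivAt vθ (-(θ t - μ)) t := by
  intro t
  have hacc : F *ᵥ (-(θ t) - Fᵀ *ᵥ lam t) + σ • (-(η t) - σ • lam t) = 0 := by
    have hconst : HasDerivAt (fun s => F *ᵥ vθ s + σ • vη s) 0 t := by
      simpa only [hmom] using hasDerivAt_const t (0 : Fin dY → ℝ)
    exact (((hvθ t).mulVec F).add ((hvη t).const_smul σ)).unique hconst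
  have hlam := transpose_mulVec_eq_of_mul_transpose_mulVec_add hσ.ne'
    (lagrange_multiplier_eq (hpos t) hacc)
  convert hvθ t using 1
  rw [hlam, hμ, hS, ← neg_sub y f, mulVec_neg, mulVec_neg, smul_neg]
  abel

/-- **Theorem 1 (linear-Gaussian case).** For the linear-Gaussian model
`y = Fθ + f + ση` with standard normal priors, the `θ`-component of the constrained
Hamiltonian dynamics on the lifted manifold satisfies `θ'' = −(θ − μ)`, where
`μ = σ⁻² Σ Fᵀ (y − f)` and `Σ = (I + σ⁻² FᵀF)⁻¹` are the posterior mean and covariance;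
i.e. it coincides with the Hamiltonian dynamics with metric `M = Σ⁻¹`. -/
theorem stmt0 (dΘ dY : ℕ) (hdΘ : 0 < dΘ) (hdY : 0 < dY)
    (F : Matrix (Fin dY) (Fin dΘ) ℝ) (f y : Fin dY → ℝ) (σ : ℝ) (hσ : 0 < σ)
    (S : Matrix (Fin dΘ) (Fin dΘ) ℝ)
    (hS : S = (1 + (σ ^ 2)⁻¹ • (Fᵀ * F))⁻¹)
    (μ : Fin dΘ → ℝ)
    (hμ : μ = (σ ^ 2)⁻¹ • (S *ᵥ (Fᵀ *ᵥ (y - f))))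
    (θ : ℝ → Fin dΘ → ℝ) (η : ℝ → Fin dY → ℝ)
    (vθ : ℝ → Fin dΘ → ℝ) (vη : ℝ → Fin dY → ℝ) (lam : ℝ → Fin dY → ℝ)
    (hθ : ∀ t : ℝ, HasDerivAt θ (vθ t) t)
    (hη : ∀ t : ℝ, HasDerivAt η (vη t) t)
    (hvθ : ∀ t : ℝ, HasDerivAt vθ (-(θ t) - Fᵀ *ᵥ lam t) t)
    (hvη : ∀ t : ℝ, HasDerivAt vη (-(η t) - σ • lam t) t)
    (hpos : ∀ t : ℝ, F *ᵥ θ t + f + σ • η t - y = 0)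
    (hmom : ∀ t : ℝ, F *ᵥ vθ t + σ • vη t = 0) :
    ∀ t : ℝ, HasDerivAt vθ (-(θ t - μ)) t :=
  stmt0_general dΘ dY F f y σ hσ S hS μ hμ θ η vθ vη lam hvθ hvη hpos hmom
end

section
/- Let F : ℝ^{d_Θ} → ℝ^{d_Y} and σ : ℝ^{d_Θ} → ℝ be differentiable with σ(θ) > 0, and let y ∈ ℝ^{d_Y}. Define η(θ) = (y − F(θ))/σ(θ), A(θ) = DF(θ) + η(θ)Dσ(θ), the metric M(θ) = I_{d_Θ} + σ(θ)⁻² A(θ)ᵀA(θ), the Gram matrix G(θ) = A(θ)A(θ)ᵀ + σ(θ)² I_{d_Y}, and the block matrix Dγ(θ) = [ I_{d_Θ} ; −σ(θ)⁻¹A(θ) ]. Then M(θ) = Dγ(θ)ᵀ Dγ(θ) is positive definite, and for every θ ∈ ℝ^{d_Θ} and p ∈ ℝ^{d_Θ} the Hamiltonian pullback identity holds: ½‖θ‖² + ½‖η(θ)‖² + ½·log det G(θ) + ½‖Dγ(θ) M(θ)⁻¹ p‖² = (1/(2σ(θ)²))‖y − F(θ)‖² + d_Y·log σ(θ) + ½‖θ‖²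 + ½ pᵀ M(θ)⁻¹ p + ½·log det M(θ). -/
/-!
With `Dγ = [I ; -σ⁻¹A]` one has `DγᵀDγ = I + σ⁻²AᵀA = M`, the Gram matrix of a map that is
injective because of its identity block; so `M` is positive definite and the kinetic term
`‖Dγ M⁻¹p‖²` collapses to `pᵀM⁻¹p`. The volume terms match by the Weinstein–Aronszajn identity
`det (AAᵀ + σ²I) = σ^(2 d_Y) det (I + σ⁻²AᵀA)`, and `‖η‖² = σ⁻²‖y - F‖²` gives the potential.
-/

open Matrix

namespace Matrix

variable {m n R : Type*}

lemma transpose_fromRows_mul_self [CommRing R] [Fintype m] [Fintype n]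
    (A : Matrix n n R) (B : Matrix m n R) :
    (fromRows A B)ᵀ * (fromRows A B : Matrix (n ⊕ m) n R) = Aᵀ * A + Bᵀ * B := by
  rw [transpose_fromRows, fromCols_mul_fromRows]

lemma mulVec_fromRows_one_injective [CommRing R] [Fintype n] [DecidableEq n] (B : Matrix m n R) :
    Function.Injective (fromRows (1 : Matrix n n R) B).mulVec := fun v w h => by
  simpa [fromRows_mulVec] using congr_arg (fun u => u ∘ Sum.inl) h

lemma posDef_transpose_fromRows_one_mul_self [Fintype m] [Fintype n] [DecidableEq n]
    (B : Matrix m n ℝ) :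
    PosDef ((fromRows (1 : Matrix n n ℝ) B)ᵀ * fromRows 1 B) := by
  have := PosDef.conjTranspose_mul_self _ (mulVec_fromRows_one_injective B)
  rwa [conjTranspose_eq_transpose_of_trivial] at this

lemma transpose_smul_mul_smul [CommRing R] [Fintype m] (c : R) (A : Matrix m n R) :
    (c • A)ᵀ * (c • A) = c ^ 2 • (Aᵀ * A) := by
  rw [transpose_smul, smul_mul, Matrix.mul_smul, smul_smul, sq]

lemma det_mul_add_smul_one {K : Type*} [Field K] [Fintype m] [Fintype n] [DecidableEq m]
    [DecidableEq n] {c : K} (hc : c ≠ 0) (A : Matrix m n K) (B : Matrix n m K) :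
    (A * B + c • 1).det = c ^ Fintype.card m * (1 + c⁻¹ • (B * A)).det := by
  have : A * B + c • 1 = c • (1 + (c⁻¹ • A) * B) := by
    rw [smul_add, smul_mul, smul_smul, mul_inv_cancel₀ hc, one_smul, add_comm,
      smul_one_eq_diagonal]
  rw [this, det_smul, det_one_add_mul_comm, Matrix.mul_smul]

lemma dotProduct_mulVec_inv_transpose_mul_self [CommRing R] [Fintype m] [Fintype n]
    [DecidableEq n] {B : Matrix m n R} (hB : IsUnit (Bᵀ * B)) (p : n → R) :
    (B *ᵥ ((Bᵀ * B)⁻¹ *ᵥ p)) ⬝ᵥ (B *ᵥ ((Bᵀ * B)⁻¹ *ᵥ p)) = p ⬝ᵥ ((Bᵀ * B)⁻¹ *ᵥ p) := by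
  set x := (Bᵀ * B)⁻¹ *ᵥ p
  have hx : (Bᵀ * B) *ᵥ x = p := by
    rw [mulVec_mulVec, mul_nonsing_inv _ ((isUnit_iff_isUnit_det _).mp hB), one_mulVec]
  rw [dotProduct_mulVec, ← vecMul_transpose, vecMul_vecMul, ← dotProduct_mulVec, hx,
    dotProduct_comm]

end Matrix

theorem stmt10_general (dΘ dY : ℕ)
    (F : (Fin dΘ → ℝ) → (Fin dY → ℝ)) (σ : (Fin dΘ → ℝ) → ℝ) (y : Fin dY → ℝ)
    (hσ : ∀ θ, 0 < σ θ)
    (η : (Fin dΘ → ℝ) → (Fin dY → ℝ)) (hη : ∀ θ, η θ = (σ θ)⁻¹ • (y - F θ))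
    (A : (Fin dΘ → ℝ) → Matrix (Fin dY) (Fin dΘ) ℝ)
    (M : (Fin dΘ → ℝ) → Matrix (Fin dΘ) (Fin dΘ) ℝ)
    (hM : ∀ θ, M θ = 1 + (σ θ ^ 2)⁻¹ • ((A θ)ᵀ * A θ))
    (G : (Fin dΘ → ℝ) → Matrix (Fin dY) (Fin dY) ℝ)
    (hG : ∀ θ, G θ = A θ * (A θ)ᵀ + σ θ ^ 2 • 1)
    (Dγ : (Fin dΘ → ℝ) → Matrix (Fin dΘ ⊕ Fin dY) (Fin dΘ) ℝ)
    (hDγ : ∀ θ, Dγ θ = Matrix.fromRows 1 (-(σ θ)⁻¹ • A θ)) :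
    ∀ (θ : Fin dΘ → ℝ) (p : Fin dΘ → ℝ),
      (M θ = (Dγ θ)ᵀ * Dγ θ ∧ (M θ).PosDef) ∧
      (1 / 2) * (θ ⬝ᵥ θ) + (1 / 2) * (η θ ⬝ᵥ η θ) + (1 / 2) * Real.log (G θ).det +
          (1 / 2) * ((Dγ θ *ᵥ ((M θ)⁻¹ *ᵥ p)) ⬝ᵥ (Dγ θ *ᵥ ((M θ)⁻¹ *ᵥ p))) =
        (1 / (2 * σ θ ^ 2)) * ((y - F θ) ⬝ᵥ (y - F θ)) + (dY : ℝ) * Real.log (σ θ) +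
          (1 / 2) * (θ ⬝ᵥ θ) + (1 / 2) * (p ⬝ᵥ ((M θ)⁻¹ *ᵥ p)) +
          (1 / 2) * Real.log (M θ).det := by
  intro θ p
  have hσ0 : σ θ ≠ 0 := (hσ θ).ne'
  have hMγ : M θ = (Dγ θ)ᵀ * Dγ θ := by
    rw [hDγ, transpose_fromRows_mul_self, transpose_smul_mul_smul, hM, transpose_one, one_mul,
      neg_sq, inv_pow]
  have hMpd : (M θ).PosDef := hMγ ▸ hDγ θ ▸ posDef_transpose_fromRows_one_mul_self _
  have hkinetic : (Dγ θ *ᵥ ((M θ)⁻¹ *ᵥ p)) ⬝ᵥ (Dγ θ *ᵥ ((M θ)⁻¹ *ᵥ p)) =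
      p ⬝ᵥ ((M θ)⁻¹ *ᵥ p) := by
    rw [hMγ] at hMpd ⊢
    exact dotProduct_mulVec_inv_transpose_mul_self hMpd.isUnit p
  have hlogdet : Real.log (G θ).det = dY * (2 * Real.log (σ θ)) + Real.log (M θ).det := by
    rw [hG, det_mul_add_smul_one (pow_ne_zero 2 hσ0), ← hM, Fintype.card_fin,
      Real.log_mul (by positivity) hMpd.det_pos.ne', Real.log_pow, Real.log_pow]
    push_cast
    ring
  have hηη : η θ ⬝ᵥ η θ = (σ θ ^ 2)⁻¹ * ((y - F θ) ⬝ᵥ (y - F θ)) := by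
    rw [hη, smul_dotProduct, dotProduct_smul, smul_eq_mul, smul_eq_mul, ← mul_assoc, ← sq,
      inv_pow]
  refine ⟨⟨hMγ, hMpd⟩, ?_⟩
  rw [hkinetic, hlogdet, hηη]
  field_simp
  ring

/-- Hamiltonian pullback identity at the core of Theorem 2: with `η(θ) = (y − F(θ))/σ(θ)`,
`A(θ) = DF(θ) + η(θ)Dσ(θ)`, metric `M(θ) = I + σ(θ)⁻² A(θ)ᵀA(θ)`, Gram matrix
`G(θ) = A(θ)A(θ)ᵀ + σ(θ)²I` and `Dγ(θ) = [I ; −σ(θ)⁻¹A(θ)]`, we have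
`M(θ) = Dγ(θ)ᵀDγ(θ)` positive definite, and the constrained Hamiltonian evaluated along
the canonical transformation equals the Riemannian-metric Hamiltonian. -/
theorem stmt10 (dΘ dY : ℕ)
    (F : (Fin dΘ → ℝ) → (Fin dY → ℝ)) (σ : (Fin dΘ → ℝ) → ℝ) (y : Fin dY → ℝ)
    (hσ : ∀ θ, 0 < σ θ)
    (DF : (Fin dΘ → ℝ) → ((Fin dΘ → ℝ) →L[ℝ] (Fin dY → ℝ)))
    (Dσ : (Fin dΘ → ℝ) → ((Fin dΘ → ℝ) →L[ℝ] ℝ))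
    (hF : ∀ θ, HasFDerivAt F (DF θ) θ) (hσd : ∀ θ, HasFDerivAt σ (Dσ θ) θ)
    (η : (Fin dΘ → ℝ) → (Fin dY → ℝ)) (hη : ∀ θ, η θ = (σ θ)⁻¹ • (y - F θ))
    (A : (Fin dΘ → ℝ) → Matrix (Fin dY) (Fin dΘ) ℝ)
    (hA : ∀ θ, A θ = LinearMap.toMatrix'
            ((DF θ + (Dσ θ).smulRight (η θ)) :
              (Fin dΘ → ℝ) →L[ℝ] (Fin dY → ℝ)).toLinearMap)
    (M : (Fin dΘ → ℝ) → Matrix (Fin dΘ) (Fin dΘ) ℝ)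
    (hM : ∀ θ, M θ = 1 + (σ θ ^ 2)⁻¹ • ((A θ)ᵀ * A θ))
    (G : (Fin dΘ → ℝ) → Matrix (Fin dY) (Fin dY) ℝ)
    (hG : ∀ θ, G θ = A θ * (A θ)ᵀ + σ θ ^ 2 • 1)
    (Dγ : (Fin dΘ → ℝ) → Matrix (Fin dΘ ⊕ Fin dY) (Fin dΘ) ℝ)
    (hDγ : ∀ θ, Dγ θ = Matrix.fromRows 1 (-(σ θ)⁻¹ • A θ)) :
    ∀ (θ : Fin dΘ → ℝ) (p : Fin dΘ → ℝ),
      (M θ = (Dγ θ)ᵀ * Dγ θ ∧ (M θ).PosDef) ∧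
      (1 / 2) * (θ ⬝ᵥ θ) + (1 / 2) * (η θ ⬝ᵥ η θ) + (1 / 2) * Real.log (G θ).det +
          (1 / 2) * ((Dγ θ *ᵥ ((M θ)⁻¹ *ᵥ p)) ⬝ᵥ (Dγ θ *ᵥ ((M θ)⁻¹ *ᵥ p))) =
        (1 / (2 * σ θ ^ 2)) * ((y - F θ) ⬝ᵥ (y - F θ)) + (dY : ℝ) * Real.log (σ θ) +
          (1 / 2) * (θ ⬝ᵥ θ) + (1 / 2) * (p ⬝ᵥ ((M θ)⁻¹ *ᵥ p)) +
          (1 / 2) * Real.log (M θ).det :=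
  stmt10_general dΘ dY F σ y hσ η hη A M hM G hG Dγ hDγ
end
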